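/- arXiv:2108.01161 — 3 statements merged into one kernel-verified Lean document; each statement's English description precedes it below -/
import Mathlib

section
/- Let X and X' be i.i.d. random variables taking values in {0, 1, ..., m} for some integer m ≥ 1. Then for all real t with |t| ≤ π, |E[e^{−itX}]|² ≤ 1 − (1/4)·P[X = 1]·P[X = 0]·t². -/
/-!
With `p k = P[X = k]`, the squared modulus of `E[e^{-itX}] = ∑ₖ pₖ e^{-itk}` is
`∑ⱼₖ pⱼ pₖ cos (t (k - j)) = 1 - ∑ⱼₖ pⱼ pₖ (1 - cos (t (k - j)))`. All terms of the last sum are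
nonnegative, and the two terms `(j, k) = (0, 1), (1, 0)` alone contribute
`2 p₀ p₁ (1 - cos t) ≥ p₀ p₁ t² / 4`, since `1 - cos t ≥ 2 t² / π² ≥ t² / 8` on `[-π, π]`.
-/

open MeasureTheory ProbabilityTheory Real Complex
open scoped ProbabilityTheory

theorem integral_comp_eq_sum_of_forall_mem {Ω α E : Type*} [MeasurableSpace Ω]
    [MeasurableSpace α] [Countable α] [MeasurableSingletonClass α] [NormedAddCommGroup E]
    [NormedSpace ℝ E] [CompleteSpace E] {μ : Measure Ω} [IsFiniteMeasure μ] {X : Ω → α}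
    (hX : Measurable X) {s : Finset α} (hs : ∀ ω, X ω ∈ s) (f : α → E) :
    ∫ ω, f (X ω) ∂μ = ∑ k ∈ s, μ.real (X ⁻¹' {k}) • f k := by
  have hconc : ∀ᵐ k ∂μ.map X, k ∈ (s : Set α) :=
    (ae_map_iff hX.aemeasurable s.measurableSet).2 (.of_forall hs)
  rw [← integral_map hX.aemeasurable (.of_discrete), ← Measure.restrict_eq_self_of_ae_mem hconc,
    setIntegral_finset s .finset]
  simp_rw [map_measureReal_apply hX (measurableSet_singleton _)]

theorem norm_sum_mul_exp_sq {ι : Type*} (s : Finset ι) (p θ : ι → ℝ) :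
    ‖∑ k ∈ s, (p k : ℂ) * exp (θ k * I)‖ ^ 2
      = ∑ j ∈ s, ∑ k ∈ s, p j * p k * Real.cos (θ j - θ k) := by
  simp only [Complex.sq_norm, normSq_apply, re_sum, im_sum, re_ofReal_mul, im_ofReal_mul,
    exp_ofReal_mul_I_re, exp_ofReal_mul_I_im, Finset.sum_mul_sum, ← Finset.sum_add_distrib,
    Real.cos_sub]
  exact Finset.sum_congr rfl fun j _ => Finset.sum_congr rfl fun k _ => by ring

theorem norm_sum_mul_exp_sq_le {ι : Type*} {s : Finset ι} {p : ι → ℝ} (hp : ∀ k, 0 ≤ p k)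
    (hsum : ∑ k ∈ s, p k = 1) (θ : ι → ℝ) {a b : ι} (ha : a ∈ s) (hb : b ∈ s) (hab : a ≠ b) :
    ‖∑ k ∈ s, (p k : ℂ) * exp (θ k * I)‖ ^ 2
      ≤ 1 - 2 * p a * p b * (1 - Real.cos (θ a - θ b)) := by
  classical
  have hdeficit : ‖∑ k ∈ s, (p k : ℂ) * exp (θ k * I)‖ ^ 2
      = 1 - ∑ jk ∈ s ×ˢ s, p jk.1 * p jk.2 * (1 - Real.cos (θ jk.1 - θ jk.2)) := by
    simp only [norm_sum_mul_exp_sq, mul_one_sub, Finset.sum_sub_distrib, Finset.sum_product,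
      ← Finset.mul_sum, ← Finset.sum_mul, hsum, one_mul]
    ring
  have hpair : ∑ jk ∈ {(a, b), (b, a)}, p jk.1 * p jk.2 * (1 - Real.cos (θ jk.1 - θ jk.2))
      = 2 * p a * p b * (1 - Real.cos (θ a - θ b)) := by
    rw [Finset.sum_pair (by simp [hab]), ← neg_sub (θ a), Real.cos_neg]
    ring
  have hsub : {(a, b), (b, a)} ⊆ s ×ˢ s := by
    simp [Finset.insert_subset_iff, ha, hb]
  rw [hdeficit, ← hpair]
  refine sub_le_sub_left (Finset.sum_le_sum_of_subset_of_nonneg hsub fun jk _ _ => ?_) 1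
  have := Real.cos_le_one (θ jk.1 - θ jk.2)
  have := hp jk.1
  have := hp jk.2
  positivity

theorem sq_div_eight_le_one_sub_cos {t : ℝ} (ht : |t| ≤ π) : t ^ 2 / 8 ≤ 1 - Real.cos t := by
  have hcos := Real.cos_le_one_sub_mul_cos_sq ht
  have hpi : π ^ 2 ≤ 16 := by nlinarith [pi_pos, pi_le_four]
  have : t ^ 2 / 8 ≤ 2 / π ^ 2 * t ^ 2 := by
    rw [div_mul_eq_mul_div, le_div_iff₀ (by positivity)]
    nlinarith [sq_nonneg t]
  linarith

theorem stmt2_general {Ω : Type*} [MeasureSpace Ω] [IsProbabilityMeasure (ℙ : Measure Ω)]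
    (m : ℕ) (hm : 1 ≤ m) (X : Ω → ℕ) (hX : Measurable X)
    (hrange : ∀ ω, X ω ≤ m) :
    ∀ t : ℝ, |t| ≤ Real.pi →
      ‖∫ ω, Complex.exp (-(Complex.I * t * X ω))‖ ^ 2
        ≤ 1 - (1 / 4) * (ℙ {ω | X ω = 1}).toReal * (ℙ {ω | X ω = 0}).toReal * t ^ 2 := by
  intro t ht
  have hs (ω : Ω) : X ω ∈ Finset.range (m + 1) := Finset.mem_range.2 (Nat.lt_succ_of_le (hrange ω))
  have hsum : ∑ k ∈ Finset.range (m + 1), (ℙ : Measure Ω).real (X ⁻¹' {k}) = 1 := by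
    rw [sum_measureReal_preimage_singleton _ fun k _ => hX (measurableSet_singleton k),
      Set.preimage_eq_univ_iff.2 fun _ ⟨ω, hω⟩ => hω ▸ hs ω, probReal_univ]
  have hchar : ∫ ω, exp (-(I * t * X ω)) = ∑ k ∈ Finset.range (m + 1),
      ((ℙ : Measure Ω).real (X ⁻¹' {k}) : ℂ) * exp (↑(-(t * k)) * I) := by
    have := integral_comp_eq_sum_of_forall_mem (μ := ℙ) hX hs fun k : ℕ => exp (↑(-(t * k)) * I)
    simp only [Complex.real_smul] at this
    rw [← this]
    congr with ω
    push_cast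
    ring_nf
  have hbound := norm_sum_mul_exp_sq_le (fun k => measureReal_nonneg) hsum (fun k => -(t * k))
    (Finset.mem_range.2 (by omega : 1 < m + 1)) (Finset.mem_range.2 m.succ_pos) one_ne_zero
  simp only [Nat.cast_one, Nat.cast_zero, mul_one, mul_zero, neg_zero, sub_zero,
    Real.cos_neg] at hbound
  have hp : 0 ≤ (ℙ : Measure Ω).real (X ⁻¹' {1}) * (ℙ : Measure Ω).real (X ⁻¹' {0}) :=
    mul_nonneg measureReal_nonneg measureReal_nonneg
  change _ ≤ 1 - 1 / 4 * (ℙ : Measure Ω).real (X ⁻¹' {1}) * (ℙ : Measure Ω).real (X ⁻¹' {0}) * t ^ 2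
  rw [hchar]
  refine hbound.trans ?_
  nlinarith [mul_le_mul_of_nonneg_left (sq_div_eight_le_one_sub_cos ht) hp]

/-- For i.i.d. random variables `X, X'` supported on `{0, …, m}` and `|t| ≤ π`,
`|E[e^{-itX}]|² ≤ 1 - (1/4)·P[X = 1]·P[X = 0]·t²`. -/
theorem stmt2 {Ω : Type*} [MeasureSpace Ω] [IsProbabilityMeasure (ℙ : Measure Ω)]
    (m : ℕ) (hm : 1 ≤ m) (X X' : Ω → ℕ) (hX : Measurable X) (hX' : Measurable X')
    (hrange : ∀ ω, X ω ≤ m) (hrange' : ∀ ω, X' ω ≤ m)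
    (hindep : IndepFun X X' ℙ)
    (hident : ∀ k : ℕ, ℙ {ω | X ω = k} = ℙ {ω | X' ω = k}) :
    ∀ t : ℝ, |t| ≤ Real.pi →
      ‖∫ ω, Complex.exp (-(Complex.I * t * X ω))‖ ^ 2
        ≤ 1 - (1 / 4) * (ℙ {ω | X ω = 1}).toReal * (ℙ {ω | X ω = 0}).toReal * t ^ 2 :=
  stmt2_general m hm X hX hrange
end

section
/- Let Z(λ) = ∏_{j=1}^N (1 − λ r_j) be a polynomial with constant term 1, nonnegative coefficients, and suppose there are constants R, C > 0 such that |r_j| ≤ R and |1 − λ r_j| ≥ 1/C for all j, for a given λ > 0 at which Z(λ) > 0. Then the variance of the associated coefficient distribution Y (with P[Y = k] proportional to a_k λ^k) satisfies Var(Y) ≤ λ·N·R·C². -/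
open Finset

section aux
open Polynomial

lemma aux_deriv_prod {ι : Type*} [DecidableEq ι] (s : Finset ι) (c : ι → ℂ) :
    derivative (∏ j ∈ s, (1 - C (c j) * X)) =
      ∑ j ∈ s, -C (c j) * ∏ i ∈ s.erase j, (1 - C (c i) * X) := by
  induction s using Finset.induction_on with
  | empty => simp
  | @insert a s ha ih =>
    rw [Finset.prod_insert ha, derivative_mul, ih, Finset.sum_insert ha,
      Finset.erase_insert ha]
    have hd : derivative (1 - C (c a) * X) = -C (c a) := by
      simp [derivative_sub]
    rw [hd, Finset.mul_sum]
    congr 1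
    refine Finset.sum_congr rfl fun j hj => ?_
    rw [Finset.erase_insert_of_ne (by rintro rfl; exact ha hj),
      Finset.prod_insert (fun h => ha (Finset.mem_of_mem_erase h))]
    ring

lemma aux_key (N : ℕ) (a : ℕ → ℝ) (r : Fin N → ℂ) (lam : ℝ)
    (hfact : ∀ z : ℂ, ∑ k ∈ range (N + 1), (a k : ℂ) * z ^ k = ∏ j, (1 - z * r j)) :
    (∑ k ∈ range (N + 1), (k : ℂ) ^ 2 * a k * (lam : ℂ) ^ k) * (∏ j, (1 - (lam : ℂ) * r j))
      - (∑ k ∈ range (N + 1), (k : ℂ) * a k * (lam : ℂ) ^ k) ^ 2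
    = -(lam : ℂ) * ∑ j, r j * (∏ i ∈ univ.erase j, (1 - (lam : ℂ) * r i)) ^ 2 := by
  classical
  set D : Fin N → ℂ := fun j => 1 - (lam : ℂ) * r j with hDdef
  set Zc : ℂ := ∏ j, D j with hZc
  set p : Fin N → ℂ := fun j => ∏ i ∈ univ.erase j, D i with hp
  set x : Fin N → ℂ := fun j => r j * p j with hx
  set P : ℂ[X] := ∑ k ∈ range (N + 1), C ((a k : ℂ)) * X ^ k with hP
  set Q : ℂ[X] := ∏ j, (1 - C (r j) * X) with hQ
  have hPQ : P = Q := by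
    apply Polynomial.funext
    intro z
    rw [hP, hQ, eval_finset_sum, eval_prod]
    rw [show (∑ k ∈ range (N+1), eval z (C ((a k : ℂ)) * X ^ k))
        = ∑ k ∈ range (N+1), (a k : ℂ) * z ^ k from
      Finset.sum_congr rfl fun k _ => by simp]
    rw [hfact z]
    exact Finset.prod_congr rfl fun j _ => by
      rw [eval_sub, eval_one, eval_mul, eval_C, eval_X, mul_comm]
  have hZp : ∀ j, D j * p j = Zc := fun j => Finset.mul_prod_erase univ D (mem_univ j)
  have hpx : ∀ j, p j = Zc + (lam : ℂ) * x j := by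
    intro j
    rw [hx, ← hZp j, hDdef]
    ring
  -- evaluate products of linear factors
  have hevD : ∀ (s : Finset (Fin N)),
      eval (lam : ℂ) (∏ i ∈ s, (1 - C (r i) * X)) = ∏ i ∈ s, D i := by
    intro s
    rw [eval_prod]
    exact Finset.prod_congr rfl fun i _ => by
      rw [eval_sub, eval_one, eval_mul, eval_C, eval_X, hDdef, mul_comm]
  -- Q evals
  have hQ0 : eval (lam : ℂ) Q = Zc := hevD univ
  have hQ1 : eval (lam : ℂ) (derivative Q) = -∑ j, x j := by
    rw [hQ, aux_deriv_prod, eval_finset_sum, ← Finset.sum_neg_distrib]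
    refine Finset.sum_congr rfl fun j _ => ?_
    rw [eval_mul, eval_neg, eval_C, hevD, hx, hp]
    ring
  have hQ2 : Zc * eval (lam : ℂ) (derivative (derivative Q)) =
      (∑ j, x j) ^ 2 - ∑ j, (x j) ^ 2 := by
    rw [hQ, aux_deriv_prod, map_sum, eval_finset_sum]
    have hterm : ∀ j : Fin N,
        Zc * eval (lam:ℂ) (derivative (-C (r j) * ∏ i ∈ univ.erase j, (1 - C (r i) * X)))
        = x j * ((∑ i, x i) - x j) := by
      intro j
      rw [derivative_mul, derivative_neg, derivative_C, neg_zero, zero_mul, zero_add,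
        aux_deriv_prod, eval_mul, eval_neg, eval_C, eval_finset_sum]
      rw [show (∑ i ∈ univ.erase j,
            eval (lam:ℂ) (-C (r i) * ∏ k ∈ (univ.erase j).erase i, (1 - C (r k) * X)))
          = ∑ i ∈ univ.erase j, -(r i) * ∏ k ∈ (univ.erase j).erase i, D k from
        Finset.sum_congr rfl fun i _ => by rw [eval_mul, eval_neg, eval_C, hevD]]
      have h2 : ∀ i ∈ univ.erase j, Zc * ∏ k ∈ (univ.erase j).erase i, D k
          = p i * p j := by
        intro i hi
        have e1 : D i * ∏ k ∈ (univ.erase j).erase i, D k = p j :=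
          Finset.mul_prod_erase (univ.erase j) D hi
        calc Zc * ∏ k ∈ (univ.erase j).erase i, D k
            = p i * (D i * ∏ k ∈ (univ.erase j).erase i, D k) := by
              rw [← hZp i]; ring
          _ = p i * p j := by rw [e1]
      have hsum : ∑ i ∈ univ.erase j, x i = (∑ i, x i) - x j := by
        rw [← Finset.sum_erase_add univ x (mem_univ j)]; ring
      calc Zc * (-(r j) * ∑ i ∈ univ.erase j, -(r i) * ∏ k ∈ (univ.erase j).erase i, D k)
          = ∑ i ∈ univ.erase j, r j * (r i * (Zc * ∏ k ∈ (univ.erase j).erase i, D k)) := by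
            rw [Finset.mul_sum, Finset.mul_sum]
            exact Finset.sum_congr rfl fun i _ => by ring
        _ = ∑ i ∈ univ.erase j, x j * x i := by
            refine Finset.sum_congr rfl fun i hi => ?_
            rw [h2 i hi, hx]
            ring
        _ = x j * ((∑ i, x i) - x j) := by
            rw [← Finset.mul_sum, hsum]
    rw [Finset.mul_sum, Finset.sum_congr rfl fun j _ => hterm j]
    rw [show (∑ j, x j * ((∑ i, x i) - x j))
        = ∑ j, ((∑ i, x i) * x j - x j ^ 2) from
      Finset.sum_congr rfl fun j _ => by ring]
    rw [Finset.sum_sub_distrib, ← Finset.mul_sum, sq]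
  -- P evals
  have hP1 : (lam : ℂ) * eval (lam : ℂ) (derivative P) =
      ∑ k ∈ range (N + 1), (k : ℂ) * a k * (lam : ℂ) ^ k := by
    rw [hP, map_sum, eval_finset_sum, Finset.mul_sum]
    refine Finset.sum_congr rfl fun k _ => ?_
    rw [derivative_C_mul, derivative_X_pow, eval_mul, eval_mul, eval_C, eval_C, eval_pow, eval_X]
    match k with
    | 0 => simp
    | (m+1) => simp only [Nat.add_sub_cancel]; push_cast; ring
  have hP2 : (lam : ℂ) ^ 2 * eval (lam : ℂ) (derivative (derivative P)) =
      (∑ k ∈ range (N + 1), (k : ℂ) ^ 2 * a k * (lam : ℂ) ^ k)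
        - ∑ k ∈ range (N + 1), (k : ℂ) * a k * (lam : ℂ) ^ k := by
    rw [hP, map_sum, map_sum, eval_finset_sum, Finset.mul_sum, ← Finset.sum_sub_distrib]
    refine Finset.sum_congr rfl fun k _ => ?_
    rw [derivative_C_mul, derivative_C_mul, derivative_X_pow, derivative_C_mul,
      derivative_X_pow]
    rw [eval_mul, eval_mul, eval_mul, eval_C, eval_C, eval_C, eval_pow, eval_X]
    match k with
    | 0 => simp
    | 1 => simp
    | (m+2) =>
      simp only [show m + 2 - 1 = m + 1 from rfl, show m + 1 - 1 = m from rfl]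
      push_cast; ring
  -- assemble
  have hS1 : (∑ k ∈ range (N + 1), (k : ℂ) * a k * (lam : ℂ) ^ k)
      = -(lam : ℂ) * ∑ j, x j := by
    rw [← hP1, hPQ, hQ1]; ring
  have hS2 : Zc * ((∑ k ∈ range (N + 1), (k : ℂ) ^ 2 * a k * (lam : ℂ) ^ k)
        - ∑ k ∈ range (N + 1), (k : ℂ) * a k * (lam : ℂ) ^ k)
      = (lam : ℂ) ^ 2 * ((∑ j, x j) ^ 2 - ∑ j, (x j) ^ 2) := by
    rw [← hP2, hPQ, ← hQ2]; ring
  have hsum2 : (∑ j, r j * p j ^ 2)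
      = Zc * (∑ j, x j) + (lam : ℂ) * ∑ j, (x j) ^ 2 := by
    rw [show (∑ j, r j * p j ^ 2) = ∑ j, (Zc * x j + (lam : ℂ) * x j ^ 2) from
      Finset.sum_congr rfl fun j _ => by
        calc r j * p j ^ 2 = x j * p j := by simp only [hx]; ring
          _ = x j * (Zc + (lam : ℂ) * x j) := by rw [hpx j]
          _ = Zc * x j + (lam : ℂ) * x j ^ 2 := by ring]
    rw [Finset.sum_add_distrib, ← Finset.mul_sum, ← Finset.mul_sum]
  rw [hsum2]
  linear_combination hS2 + ((lam : ℂ) * (∑ j, x j)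
    - (∑ k ∈ range (N + 1), (k : ℂ) * a k * (lam : ℂ) ^ k) + Zc) * hS1

end aux

/-- If `Z(λ) = ∑ a_k λ^k = ∏ (1 - λ r_j)` with `a_0 = 1`, nonnegative coefficients,
`|r_j| ≤ R` and `|1 - λ r_j| ≥ 1/C`, then the variance of the coefficient distribution
`P[Y = k] = a_k λ^k / Z(λ)` is at most `λ·N·R·C²`. -/
theorem stmt5 (N : ℕ) (a : ℕ → ℝ) (r : Fin N → ℂ) (lam : ℝ) (hlam : 0 < lam)
    (ha0 : a 0 = 1) (hanonneg : ∀ k, 0 ≤ a k)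
    (hfact : ∀ z : ℂ, ∑ k ∈ range (N + 1), (a k : ℂ) * z ^ k = ∏ j, (1 - z * r j))
    (R C : ℝ) (hR : 0 < R) (hC : 0 < C)
    (hrbound : ∀ j, ‖r j‖ ≤ R)
    (hsep : ∀ j, 1 / C ≤ ‖1 - (lam : ℂ) * r j‖)
    (Z : ℝ) (hZ : Z = ∑ k ∈ range (N + 1), a k * lam ^ k) (hZpos : 0 < Z)
    (μ σsq : ℝ)
    (hμ : μ = (∑ k ∈ range (N + 1), k * a k * lam ^ k) / Z)
    (hσ : σsq = (∑ k ∈ range (N + 1), (k : ℝ) ^ 2 * a k * lam ^ k) / Z - μ ^ 2) :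
    σsq ≤ lam * N * R * C ^ 2 := by
  classical
  have key := aux_key N a r lam hfact
  set S1 : ℝ := ∑ k ∈ range (N + 1), (k : ℝ) * a k * lam ^ k with hS1
  set S2 : ℝ := ∑ k ∈ range (N + 1), (k : ℝ) ^ 2 * a k * lam ^ k with hS2
  set W : ℂ := ∑ j, r j * (∏ i ∈ univ.erase j, (1 - (lam : ℂ) * r i)) ^ 2 with hW
  have hZc : ((Z : ℝ) : ℂ) = ∏ j, (1 - (lam : ℂ) * r j) := by
    rw [hZ]
    push_cast
    exact hfact lam
  have hreal : ((S2 * Z - S1 ^ 2 : ℝ) : ℂ) = -(lam : ℂ) * W := by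
    have c2 : ((S2 : ℝ) : ℂ) = ∑ k ∈ range (N + 1), (k : ℂ) ^ 2 * a k * (lam : ℂ) ^ k := by
      rw [hS2]; push_cast; rfl
    have c1 : ((S1 : ℝ) : ℂ) = ∑ k ∈ range (N + 1), (k : ℂ) * a k * (lam : ℂ) ^ k := by
      rw [hS1]; push_cast; rfl
    calc ((S2 * Z - S1 ^ 2 : ℝ) : ℂ) = ((S2:ℝ):ℂ) * ((Z:ℝ):ℂ) - ((S1:ℝ):ℂ) ^ 2 := by
          push_cast; ring
      _ = -(lam : ℂ) * W := by rw [c1, c2, hZc]; exact key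
  have hre : S2 * Z - S1 ^ 2 = (-(lam : ℂ) * W).re := by
    rw [← hreal, Complex.ofReal_re]
  -- norm bounds
  have hDpos : ∀ j : Fin N, (0 : ℝ) < ‖1 - (lam : ℂ) * r j‖ :=
    fun j => lt_of_lt_of_le (by positivity) (hsep j)
  have hZnorm : ‖(∏ j, (1 - (lam : ℂ) * r j))‖ = Z := by
    rw [← hZc, Complex.norm_real, Real.norm_eq_abs, abs_of_pos hZpos]
  have hperase : ∀ j : Fin N, ‖∏ i ∈ univ.erase j, (1 - (lam : ℂ) * r i)‖ ≤ Z * C := by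
    intro j
    have he : ‖1 - (lam : ℂ) * r j‖ * ‖∏ i ∈ univ.erase j, (1 - (lam : ℂ) * r i)‖ = Z := by
      rw [← norm_mul, Finset.mul_prod_erase univ (fun i => 1 - (lam : ℂ) * r i) (mem_univ j), hZnorm]
    have h2 : 1 ≤ C * ‖1 - (lam : ℂ) * r j‖ := by
      have := (div_le_iff₀ hC).mp (hsep j)
      linarith
    have h3 : 0 ≤ (C * ‖1 - (lam : ℂ) * r j‖ - 1) *
        ‖∏ i ∈ univ.erase j, (1 - (lam : ℂ) * r i)‖ :=
      mul_nonneg (by linarith) (norm_nonneg _)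
    have h4 : C * (‖1 - (lam : ℂ) * r j‖ *
        ‖∏ i ∈ univ.erase j, (1 - (lam : ℂ) * r i)‖) = C * Z := by rw [he]
    nlinarith [h3, h4]
  have hWbound : ‖W‖ ≤ N * (R * (Z * C) ^ 2) := by
    rw [hW]
    refine le_trans (norm_sum_le _ _) ?_
    have hterm : ∀ j : Fin N,
        ‖r j * (∏ i ∈ univ.erase j, (1 - (lam : ℂ) * r i)) ^ 2‖ ≤ R * (Z * C) ^ 2 := by
      intro j
      rw [norm_mul, norm_pow]
      have h2 : ‖∏ i ∈ univ.erase j, (1 - (lam : ℂ) * r i)‖ ^ 2 ≤ (Z * C) ^ 2 := by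
        apply pow_le_pow_left₀ (norm_nonneg _) (hperase j)
      exact mul_le_mul (hrbound j) h2 (by positivity) hR.le
    calc (∑ j, ‖r j * (∏ i ∈ univ.erase j, (1 - (lam : ℂ) * r i)) ^ 2‖)
        ≤ ∑ _j : Fin N, R * (Z * C) ^ 2 := Finset.sum_le_sum fun j _ => hterm j
      _ = N * (R * (Z * C) ^ 2) := by rw [Finset.sum_const, card_univ, Fintype.card_fin]; ring
  -- conclude
  have hσZ : σsq * Z ^ 2 = S2 * Z - S1 ^ 2 := by
    rw [hσ, hμ]
    field_simp
  have hstep : σsq * Z ^ 2 ≤ lam * N * R * C ^ 2 * Z ^ 2 := by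
    rw [hσZ, hre]
    calc (-(lam : ℂ) * W).re ≤ ‖-(lam : ℂ) * W‖ := Complex.re_le_norm _
      _ = lam * ‖W‖ := by
          rw [norm_mul, norm_neg, Complex.norm_real, Real.norm_eq_abs, abs_of_pos hlam]
      _ ≤ lam * (N * (R * (Z * C) ^ 2)) := by
          exact mul_le_mul_of_nonneg_left hWbound hlam.le
      _ = lam * N * R * C ^ 2 * Z ^ 2 := by ring
  have hZ2 : (0 : ℝ) < Z ^ 2 := by positivity
  exact le_of_mul_le_mul_right hstep hZ2
end

section
/- Let G be a claw-free graph with maximum degree at most Δ and independence number i*(G) ≥ n/(Δ+1) where n is the number of vertices. Let Y be the size of a random independent set from the hard-core model at fugacity λ. Then for all δ ∈ (0,1) and all λ ≥ 8^{(Δ+1)/δ²}, P[Y ≤ (1 − δ/2)·i*(G)] ≤ 2^n · λ^{−δn/(2Δ+2)} / λ^{−i*(G)}·Z_G(λ)^{-1} ≤ 2^n λ^{−δ n/(2Δ+2)}. -/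
open Finset
open scoped Classical

/-! Since `λ ≥ 1`, every independent set of size at most `m` has weight at most `λ^m`, and
there are at most `2^n` of them, while a maximum independent set alone gives
`Z_G(λ) ≥ λ^{i*}`. Hence the lower tail has probability at most `2^n λ^{m - i*}`, and with
`m = (1 - δ/2) i*` the exponent is `-δ i*/2 ≤ -δ n/(2Δ+2)`. -/

lemma sum_ite_pow_le_card_mul_rpow {ι : Type*} {lam : ℝ} (hlam : 1 ≤ lam) (s : Finset ι)
    (f : ι → ℕ) (m : ℝ) :
    ∑ i ∈ s, (if (f i : ℝ) ≤ m then lam ^ f i else 0) ≤ #s * lam ^ m := by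
  calc ∑ i ∈ s, (if (f i : ℝ) ≤ m then lam ^ f i else 0)
      ≤ ∑ _i ∈ s, lam ^ m := by
        refine sum_le_sum fun i _ => ?_
        split_ifs with h
        · rw [← Real.rpow_natCast]
          exact Real.rpow_le_rpow_of_exponent_le hlam h
        · positivity
    _ = #s * lam ^ m := by rw [sum_const, nsmul_eq_mul]

lemma sum_ite_pow_div_sum_pow_le {ι : Type*} {lam : ℝ} (hlam : 1 ≤ lam) {s : Finset ι}
    {f : ι → ℕ} {k : ℕ} (hk : ∃ i ∈ s, f i = k) (m : ℝ) :
    (∑ i ∈ s, if (f i : ℝ) ≤ m then lam ^ f i else 0) / ∑ i ∈ s, lam ^ f i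
      ≤ #s * lam ^ (m - k) := by
  obtain ⟨i₀, hi₀, rfl⟩ := hk
  have hlam₀ : 0 < lam := one_pos.trans_le hlam
  have hZ : lam ^ f i₀ ≤ ∑ i ∈ s, lam ^ f i :=
    single_le_sum (f := fun i => lam ^ f i) (fun _ _ => by positivity) hi₀
  calc (∑ i ∈ s, if (f i : ℝ) ≤ m then lam ^ f i else 0) / ∑ i ∈ s, lam ^ f i
      ≤ (∑ i ∈ s, if (f i : ℝ) ≤ m then lam ^ f i else 0) / lam ^ f i₀ :=
        div_le_div_of_nonneg_left (sum_nonneg fun _ _ => by positivity) (by positivity) hZ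
    _ ≤ #s * lam ^ m / lam ^ f i₀ := by
        gcongr
        exact sum_ite_pow_le_card_mul_rpow hlam s f m
    _ = #s * lam ^ (m - f i₀) := by
        rw [mul_div_assoc, Real.rpow_sub hlam₀, Real.rpow_natCast]

lemma card_finset_le_two_pow {V : Type*} [Fintype V] (s : Finset (Finset V)) :
    (#s : ℝ) ≤ 2 ^ Fintype.card V := by
  exact_mod_cast (card_le_univ s).trans (Fintype.card_finset (α := V)).le

lemma one_sub_half_mul_sub_le {δ n i d : ℝ} (hδ : 0 ≤ δ) (hd : 0 < d) (hi : n / d ≤ i) :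
    (1 - δ / 2) * i - i ≤ -(δ * n) / (2 * d) := by
  have h := mul_le_mul_of_nonneg_left hi (by positivity : 0 ≤ δ / 2)
  have : -(δ * n) / (2 * d) = -(δ / 2 * (n / d)) := by field_simp
  linarith

theorem stmt9_general {V : Type*} [Fintype V] (Δ : ℕ)
    (ind : Finset (Finset V))
    (istar : ℕ) (histar₁ : ∃ S ∈ ind, S.card = istar)
    (histar₃ : (Fintype.card V : ℝ) / (Δ + 1) ≤ istar) :
    ∀ δ ∈ Set.Ioo (0 : ℝ) 1, ∀ lam : ℝ, (8 : ℝ) ^ (((Δ : ℝ) + 1) / δ ^ 2) ≤ lam →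
      (∑ S ∈ ind, if (S.card : ℝ) ≤ (1 - δ / 2) * istar then lam ^ S.card else 0)
          / (∑ S ∈ ind, lam ^ S.card)
        ≤ 2 ^ (Fintype.card V) *
            lam ^ (-(δ * (Fintype.card V : ℝ)) / (2 * (Δ : ℝ) + 2)) := by
  rintro δ ⟨hδ, -⟩ lam hlam
  have hlam₁ : 1 ≤ lam := (Real.one_le_rpow (by norm_num) (by positivity)).trans hlam
  have hexp := one_sub_half_mul_sub_le hδ.le (by positivity : (0 : ℝ) < Δ + 1) histar₃
  rw [mul_add, mul_one] at hexp
  calc _ ≤ #ind * lam ^ ((1 - δ / 2) * istar - istar) :=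
        sum_ite_pow_div_sum_pow_le hlam₁ histar₁ _
    _ ≤ 2 ^ Fintype.card V * lam ^ (-(δ * (Fintype.card V : ℝ)) / (2 * (Δ : ℝ) + 2)) := by
        gcongr
        exact card_finset_le_two_pow ind

/-- For a claw-free graph `G` with maximum degree at most `Δ` and independence number
`i*(G) ≥ n/(Δ+1)`, the hard-core model at large fugacity `λ ≥ 8^{(Δ+1)/δ²}` puts probability
at most `2^n·λ^{-δn/(2Δ+2)}` on independent sets of size at most `(1-δ/2)·i*(G)`. -/
theorem stmt9 {V : Type*} [Fintype V] [DecidableEq V] (G : SimpleGraph V)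
    [DecidableRel G.Adj] (Δ : ℕ) (hdeg : ∀ v, G.degree v ≤ Δ)
    (hclaw : ∀ v a b c : V, G.Adj v a → G.Adj v b → G.Adj v c →
      a ≠ b → a ≠ c → b ≠ c → (G.Adj a b ∨ G.Adj a c ∨ G.Adj b c))
    (ind : Finset (Finset V))
    (hind : ind = Finset.univ.filter (fun S : Finset V => ∀ u ∈ S, ∀ v ∈ S, ¬ G.Adj u v))
    (istar : ℕ) (histar₁ : ∃ S ∈ ind, S.card = istar) (histar₂ : ∀ S ∈ ind, S.card ≤ istar)
    (histar₃ : (Fintype.card V : ℝ) / (Δ + 1) ≤ istar) :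
    ∀ δ ∈ Set.Ioo (0 : ℝ) 1, ∀ lam : ℝ, (8 : ℝ) ^ (((Δ : ℝ) + 1) / δ ^ 2) ≤ lam →
      (∑ S ∈ ind, if (S.card : ℝ) ≤ (1 - δ / 2) * istar then lam ^ S.card else 0)
          / (∑ S ∈ ind, lam ^ S.card)
        ≤ 2 ^ (Fintype.card V) *
            lam ^ (-(δ * (Fintype.card V : ℝ)) / (2 * (Δ : ℝ) + 2)) :=
  stmt9_general Δ ind istar histar₁ histar₃
end
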